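/- Let f : X → Y be a continuous map from a topological space X to a Hausdorff space Y, and let κ be an infinite cardinal with l(X) ≤ κ and ψ(Y) ≤ κ. If |f(X)| > κ, then the set of points y ∈ f(X) such that every open neighborhood V of y in Y satisfies |V ∩ f(X)| > κ is infinite. -/

import Mathlib

open Cardinal Set Topology

universe u

def FunctionallyHausdorff (X : Type u) [TopologicalSpace X] : Prop :=
  ∀ x y : X, x ≠ y → ∃ f : X → unitInterval, Continuous f ∧ f x = 0 ∧ f y = 1

def IsCechComplete (X : Type u) [TopologicalSpace X] : Prop :=
  ∃ (K : Type u) (_ : TopologicalSpace K) (e : X → K),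
    CompactSpace K ∧ T2Space K ∧ IsEmbedding e ∧ DenseRange e ∧ IsGδ (Set.range e)

noncomputable def lindelofNumber (X : Type u) [TopologicalSpace X] : Cardinal.{u} :=
  sInf {κ : Cardinal.{u} | ℵ₀ ≤ κ ∧ ∀ U : Set (Set X), (∀ u ∈ U, IsOpen u) → ⋃₀ U = Set.univ →
    ∃ V ⊆ U, #↥V ≤ κ ∧ ⋃₀ V = Set.univ}

noncomputable def pseudocharacter (X : Type u) [TopologicalSpace X] : Cardinal.{u} :=
  sInf {κ : Cardinal.{u} | ℵ₀ ≤ κ ∧ ∀ x : X, ∃ 𝒰 : Set (Set X),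
    #↥𝒰 ≤ κ ∧ (∀ U ∈ 𝒰, IsOpen U ∧ x ∈ U) ∧ ⋂₀ 𝒰 = ⋂₀ {U : Set X | IsOpen U ∧ x ∈ U}}

def IsScatteredSet {X : Type u} [TopologicalSpace X] (S : Set X) : Prop :=
  ∀ T ⊆ S, T.Nonempty → ∃ x ∈ T, ∃ U : Set X, IsOpen U ∧ U ∩ T = {x}

def IsKAnalytic (X : Type u) [TopologicalSpace X] : Prop :=
  ∃ (P : Type u) (_ : TopologicalSpace P) (f : P → X),
    LindelofSpace P ∧ IsCechComplete P ∧ Continuous f ∧ Function.Surjective f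

def IsAnalyticSpace (X : Type u) [TopologicalSpace X] : Prop :=
  ∃ (P : Type u) (_ : TopologicalSpace P), PolishSpace P ∧
    ∃ f : P → X, Continuous f ∧ Function.Surjective f

noncomputable def boundingNumber : Cardinal.{0} :=
  sInf {κ : Cardinal.{0} | ∃ B : Set (ℕ → ℕ), #↥B = κ ∧
    ∀ y : ℕ → ℕ, ∃ x ∈ B, {n : ℕ | ¬ x n ≤ y n}.Infinite}

/-! Let `A = f(X)` and let `S` be the set of points of `A` all of whose neighbourhoods meet `A`
in more than `κ` points. If `G` is an open set containing `S`, the points of `A \ G` have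
neighbourhoods with small trace on `A`; together with `f⁻¹(G)` their preimages cover `X`, so a
subcover of size `κ` shows `|A \ G| ≤ κ`. If `S` were finite, it would be the intersection of
at most `κ^|S| = κ` open sets (each point of `S` is a `G_κ`-point, `Y` being `T₁`), hence
`A ⊆ S ∪ ⋃_G (A \ G)` would have at most `κ` points. -/

theorem exists_subcover_of_lindelofNumber_le {X : Type u} [TopologicalSpace X]
    {κ : Cardinal.{u}} (hl : lindelofNumber X ≤ κ) (𝒞 : Set (Set X))
    (h𝒞open : ∀ U ∈ 𝒞, IsOpen U) (h𝒞cov : ⋃₀ 𝒞 = Set.univ) :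
    ∃ 𝒟 ⊆ 𝒞, #𝒟 ≤ κ ∧ ⋃₀ 𝒟 = Set.univ := by
  have hne : {κ' : Cardinal.{u} | ℵ₀ ≤ κ' ∧ ∀ 𝒞 : Set (Set X), (∀ U ∈ 𝒞, IsOpen U) →
      ⋃₀ 𝒞 = Set.univ → ∃ 𝒟 ⊆ 𝒞, #𝒟 ≤ κ' ∧ ⋃₀ 𝒟 = Set.univ}.Nonempty :=
    ⟨max ℵ₀ #(Set X), le_max_left _ _, fun 𝒞 _ h𝒞cov =>
      ⟨𝒞, Subset.rfl, (mk_set_le 𝒞).trans (le_max_right _ _), h𝒞cov⟩⟩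
  obtain ⟨𝒟, h𝒟𝒞, h𝒟κ, h𝒟cov⟩ := (csInf_mem hne).2 𝒞 h𝒞open h𝒞cov
  exact ⟨𝒟, h𝒟𝒞, h𝒟κ.trans hl, h𝒟cov⟩

theorem exists_sInter_eq_singleton_of_pseudocharacter_le {Y : Type u} [TopologicalSpace Y]
    [T1Space Y] {κ : Cardinal.{u}} (hψ : pseudocharacter Y ≤ κ) (y : Y) :
    ∃ 𝒰 : Set (Set Y), #𝒰 ≤ κ ∧ (∀ U ∈ 𝒰, IsOpen U) ∧ ⋂₀ 𝒰 = {y} := by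
  have hne : {κ' : Cardinal.{u} | ℵ₀ ≤ κ' ∧ ∀ y : Y, ∃ 𝒰 : Set (Set Y),
      #𝒰 ≤ κ' ∧ (∀ U ∈ 𝒰, IsOpen U ∧ y ∈ U) ∧
      ⋂₀ 𝒰 = ⋂₀ {U : Set Y | IsOpen U ∧ y ∈ U}}.Nonempty :=
    ⟨max ℵ₀ #(Set Y), le_max_left _ _, fun y =>
      ⟨_, (mk_set_le _).trans (le_max_right _ _), fun _ hU => hU, rfl⟩⟩
  obtain ⟨𝒰, h𝒰κ, h𝒰open, h𝒰y⟩ := (csInf_mem hne).2 y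
  have hker : ⋂₀ {U : Set Y | IsOpen U ∧ y ∈ U} = {y} := by
    simpa only [nhdsKer_def, singleton_subset_iff] using nhdsKer_eq_of_t1Space {y}
  exact ⟨𝒰, h𝒰κ.trans hψ, fun U hU => (h𝒰open U hU).1, h𝒰y.trans hker⟩

theorem exists_sInter_eq_of_finite_of_pseudocharacter_le {Y : Type u} [TopologicalSpace Y]
    [T1Space Y] {κ : Cardinal.{u}} (hκ : ℵ₀ ≤ κ) (hψ : pseudocharacter Y ≤ κ) {S : Set Y}
    (hS : S.Finite) : ∃ 𝒢 : Set (Set Y), #𝒢 ≤ κ ∧ (∀ G ∈ 𝒢, IsOpen G) ∧ ⋂₀ 𝒢 = S := by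
  induction S, hS using Set.Finite.induction_on with
  | empty =>
    refine ⟨{∅}, ?_, by simp, by simp⟩
    rw [mk_singleton]
    exact one_le_aleph0.trans hκ
  | @insert a s _ _ ih =>
    obtain ⟨𝒢, h𝒢κ, h𝒢open, h𝒢s⟩ := ih
    obtain ⟨𝒰, h𝒰κ, h𝒰open, h𝒰a⟩ := exists_sInter_eq_singleton_of_pseudocharacter_le hψ a
    refine ⟨image2 (· ∪ ·) 𝒰 𝒢, ?_, ?_, ?_⟩
    · calc #(image2 (· ∪ ·) 𝒰 𝒢) ≤ #𝒰 * #𝒢 := mk_image2_le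
        _ ≤ κ * κ := mul_le_mul' h𝒰κ h𝒢κ
        _ = κ := mul_eq_self hκ
    · rintro _ ⟨U, hU, G, hG, rfl⟩
      exact (h𝒰open U hU).union (h𝒢open G hG)
    · rw [insert_eq, ← h𝒰a, ← h𝒢s, sInter_union_sInter, ← image_uncurry_prod, sInter_image]
      rfl

theorem mk_range_diff_le_of_lindelofNumber_le {X Y : Type u} [TopologicalSpace X]
    [TopologicalSpace Y] {f : X → Y} (hf : Continuous f) {κ : Cardinal.{u}} (hκ : ℵ₀ ≤ κ)
    (hl : lindelofNumber X ≤ κ) {G : Set Y} (hG : IsOpen G)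
    (hsmall : ∀ y ∈ range f \ G, ∃ V, IsOpen V ∧ y ∈ V ∧ #↥(V ∩ range f) ≤ κ) :
    #↥(range f \ G) ≤ κ := by
  set 𝒞 : Set (Set X) :=
    insert (f ⁻¹' G) (preimage f '' {V | IsOpen V ∧ #↥(V ∩ range f) ≤ κ})
  have h𝒞open : ∀ U ∈ 𝒞, IsOpen U := by
    rintro U (rfl | ⟨V, hV, rfl⟩)
    exacts [hG.preimage hf, hV.1.preimage hf]
  have h𝒞cov : ⋃₀ 𝒞 = Set.univ := by
    refine eq_univ_of_forall fun x => ?_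
    by_cases hx : f x ∈ G
    · exact ⟨_, mem_insert _ _, hx⟩
    · obtain ⟨V, hV, hxV, hVκ⟩ := hsmall (f x) ⟨mem_range_self x, hx⟩
      exact ⟨f ⁻¹' V, mem_insert_of_mem _ ⟨V, ⟨hV, hVκ⟩, rfl⟩, hxV⟩
  obtain ⟨𝒟, h𝒟𝒞, h𝒟κ, h𝒟cov⟩ := exists_subcover_of_lindelofNumber_le hl 𝒞 h𝒞open h𝒞cov
  have hsub : range f \ G ⊆ ⋃ D ∈ 𝒟, f '' D \ G := by
    rintro _ ⟨⟨x, rfl⟩, hx⟩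
    obtain ⟨D, hD, hxD⟩ : x ∈ ⋃₀ 𝒟 := h𝒟cov ▸ mem_univ x
    exact mem_biUnion hD ⟨mem_image_of_mem f hxD, hx⟩
  have hpiece : ∀ D ∈ 𝒟, #↥(f '' D \ G) ≤ κ := by
    intro D hD
    rcases h𝒟𝒞 hD with rfl | ⟨V, ⟨-, hVκ⟩, rfl⟩
    · simp [sdiff_eq_empty.2 (image_preimage_subset f G)]
    · rw [image_preimage_eq_inter_range]
      exact (mk_le_mk_of_subset sdiff_subset).trans hVκ
  calc #↥(range f \ G) ≤ #↥(⋃ D ∈ 𝒟, f '' D \ G) := mk_le_mk_of_subset hsub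
    _ ≤ #𝒟 * ⨆ D : 𝒟, #↥(f '' D \ G) := mk_biUnion_le _ _
    _ ≤ κ * κ := mul_le_mul' h𝒟κ (ciSup_le' fun D => hpiece D D.2)
    _ = κ := mul_eq_self hκ

theorem mk_le_of_mk_sInter_le_of_mk_diff_le {Y : Type u} {κ : Cardinal.{u}} (hκ : ℵ₀ ≤ κ)
    {A : Set Y} {𝒢 : Set (Set Y)} (h𝒢κ : #𝒢 ≤ κ) (hsInter : #↥(⋂₀ 𝒢) ≤ κ)
    (hdiff : ∀ G ∈ 𝒢, #↥(A \ G) ≤ κ) : #A ≤ κ := by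
  have hA : A ⊆ ⋂₀ 𝒢 ∪ ⋃ G ∈ 𝒢, A \ G := by
    intro y hy
    by_cases hy𝒢 : y ∈ ⋂₀ 𝒢
    · exact Or.inl hy𝒢
    · obtain ⟨G, hG, hyG⟩ : ∃ G ∈ 𝒢, y ∉ G := by simpa using hy𝒢
      exact Or.inr (mem_biUnion hG ⟨hy, hyG⟩)
  calc #A ≤ #↥(⋂₀ 𝒢) + #𝒢 * ⨆ G : 𝒢, #↥(A \ G) :=
        (mk_le_mk_of_subset hA).trans
          ((mk_union_le _ _).trans (add_le_add le_rfl (mk_biUnion_le _ _)))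
    _ ≤ κ + κ * κ := add_le_add hsInter (mul_le_mul' h𝒢κ (ciSup_le' fun G => hdiff G G.2))
    _ = κ := by rw [mul_eq_self hκ, add_eq_self hκ]

theorem stmt19 {X Y : Type u} [TopologicalSpace X] [TopologicalSpace Y] [T2Space Y]
    (f : X → Y) (hf : Continuous f) (κ : Cardinal.{u}) (hκ : ℵ₀ ≤ κ)
    (hl : lindelofNumber X ≤ κ) (hψ : pseudocharacter Y ≤ κ)
    (hcard : κ < #↥(Set.range f)) :
    {y ∈ Set.range f | ∀ V : Set Y, IsOpen V → y ∈ V →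
      κ < #↥(V ∩ Set.range f)}.Infinite := by
  set S := {y ∈ Set.range f | ∀ V : Set Y, IsOpen V → y ∈ V → κ < #↥(V ∩ Set.range f)}
  intro hS
  obtain ⟨𝒢, h𝒢κ, h𝒢open, h𝒢S⟩ := exists_sInter_eq_of_finite_of_pseudocharacter_le hκ hψ hS
  have hdiff : ∀ G ∈ 𝒢, #↥(range f \ G) ≤ κ := by
    refine fun G hG => mk_range_diff_le_of_lindelofNumber_le hf hκ hl (h𝒢open G hG) ?_
    rintro y ⟨hyf, hyG⟩
    have hyS : y ∉ S := fun hyS => hyG ((h𝒢S ▸ sInter_subset_of_mem hG : S ⊆ G) hyS)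
    simpa [S, hyf, -mem_range] using hyS
  have hSκ : #S ≤ κ := (lt_aleph0_iff_set_finite.2 hS).le.trans hκ
  exact hcard.not_ge (mk_le_of_mk_sInter_le_of_mk_diff_le hκ h𝒢κ (h𝒢S ▸ hSκ) hdiff)
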